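/- Suppose F is a forest of order n on vertex set V. If max{3, max_{x∈V} ⌈(n+1)/(α_x+1)⌉} > 3, then the maximum of ⌈(n+1)/(α_x+1)⌉ over x ∈ V is attained only at the unique vertex of maximum degree Δ(F). -/

import Mathlib

open SimpleGraph Finset

variable {V : Type*}

/-- A stable (independent) set of vertices. -/
def IsStable (G : SimpleGraph V) (S : Finset V) : Prop :=
  ∀ x ∈ S, ∀ y ∈ S, ¬G.Adj x y

/-- Stability (independence) number. -/
noncomputable def stabNum (G : SimpleGraph V) [Fintype V] : ℕ :=
  sSup {n | ∃ S : Finset V, IsStable G S ∧ S.card = n}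

/-- `x`-stability number: max size of a stable set containing `x`. -/
noncomputable def stabNumAt (G : SimpleGraph V) [Fintype V] (x : V) : ℕ :=
  sSup {n | ∃ S : Finset V, IsStable G S ∧ x ∈ S ∧ S.card = n}

/-- Stability number of the subgraph induced on a vertex set `s`. -/
noncomputable def stabNumOn (G : SimpleGraph V) (s : Set V) : ℕ :=
  sSup {n | ∃ S : Finset V, ↑S ⊆ s ∧ IsStable G S ∧ S.card = n}

/-- `G` admits an equitable `k`-coloring. -/
def EquitablyColorable (G : SimpleGraph V) [Fintype V] (k : ℕ) : Prop :=
  ∃ c : V → Fin k, (∀ a b, G.Adj a b → c a ≠ c b) ∧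
    ∀ i j : Fin k,
      (Finset.univ.filter fun v => c v = i).card ≤
        (Finset.univ.filter fun v => c v = j).card + 1

/-- Equitable chromatic number. -/
noncomputable def eqChromNum (G : SimpleGraph V) [Fintype V] : ℕ :=
  sInf {k | EquitablyColorable G k}


lemma forest_no_triangle {F : SimpleGraph V} (hF : F.IsAcyclic) {x a b : V}
    (hxa : F.Adj x a) (hxb : F.Adj x b) (hab : F.Adj a b) : False := by
  classical
  have h1 : ((Walk.cons hab Walk.nil : F.Walk a b)).IsPath := by
    simp [Walk.isPath_def, hab.ne]
  have h2 : ((Walk.cons hxa.symm (Walk.cons hxb Walk.nil) : F.Walk a b)).IsPath := by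
    simp [Walk.isPath_def, hxa.ne', hab.ne, hxb.ne]
  have := hF.path_unique ⟨_, h1⟩ ⟨_, h2⟩
  have := congrArg (fun q : F.Path a b => (q : F.Walk a b).length) this
  simp at this

lemma forest_no_c4 {F : SimpleGraph V} (hF : F.IsAcyclic) {v x a b : V}
    (hvx : v ≠ x) (hxa : F.Adj x a) (hxb : F.Adj x b) (hab : a ≠ b)
    (hva : F.Adj v a) (hvb : F.Adj v b) : False := by
  classical
  have h1 : ((Walk.cons hva (Walk.cons hxa.symm Walk.nil) : F.Walk v x)).IsPath := by
    simp [Walk.isPath_def, hva.ne, hvx, hxa.ne']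
  have h2 : ((Walk.cons hvb (Walk.cons hxb.symm Walk.nil) : F.Walk v x)).IsPath := by
    simp [Walk.isPath_def, hvb.ne, hvx, hxb.ne']
  have := hF.path_unique ⟨_, h1⟩ ⟨_, h2⟩
  have := congrArg (fun q : F.Path v x => (q : F.Walk v x).support) this
  simp at this
  exact hab this

lemma forest_adj_path_length {F : SimpleGraph V} (hF : F.IsAcyclic) {r u v : V}
    (h : F.Adj u v) (p : F.Walk r u) (hp : p.IsPath) (q : F.Walk r v) (hq : q.IsPath) :
    q.length = p.length + 1 ∨ p.length = q.length + 1 := by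
  classical
  by_cases hv : v ∈ p.support
  · right
    have hq' : q = p.takeUntil v hv :=
      congrArg Subtype.val (hF.path_unique ⟨q, hq⟩ ⟨_, hp.takeUntil hv⟩)
    have hedge : ((Walk.cons h.symm Walk.nil : F.Walk v u)).IsPath := by
      simp [Walk.isPath_def, h.ne']
    have hd : p.dropUntil v hv = Walk.cons h.symm Walk.nil :=
      congrArg Subtype.val (hF.path_unique ⟨_, hp.dropUntil hv⟩ ⟨_, hedge⟩)
    have hsplit := congrArg Walk.length (p.take_spec hv)
    rw [Walk.length_append, hd] at hsplit
    simp only [Walk.length_cons, Walk.length_nil] at hsplit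
    rw [hq']
    omega
  · left
    have hcat : (p.concat h).IsPath := by
      rw [Walk.isPath_def, Walk.support_concat,
        List.nodup_append]
      exact ⟨hp.support_nodup, List.nodup_singleton v, fun a ha b hb => by
        simp at hb; subst hb; exact fun he => hv (he ▸ ha)⟩
    have hqe : q = p.concat h := congrArg Subtype.val (hF.path_unique ⟨q, hq⟩ ⟨_, hcat⟩)
    rw [hqe, Walk.length_concat]

lemma forest_two_coloring {F : SimpleGraph V} (hF : F.IsAcyclic) :
    ∃ c : V → Bool, ∀ u v, F.Adj u v → c u ≠ c v := by
  classical
  refine ⟨fun v => decide (F.dist ((F.connectedComponentMk v).out) v % 2 = 0), ?_⟩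
  intro u v huv hc
  have hcomp : F.connectedComponentMk u = F.connectedComponentMk v :=
    SimpleGraph.ConnectedComponent.sound huv.reachable
  have hout : (F.connectedComponentMk v).out = (F.connectedComponentMk u).out := by
    rw [hcomp]
  have hru : F.Reachable ((F.connectedComponentMk u).out) u :=
    SimpleGraph.ConnectedComponent.exact (Quot.out_eq _)
  have hrv : F.Reachable ((F.connectedComponentMk u).out) v := hru.trans huv.reachable
  obtain ⟨p, hp, hpl⟩ := hru.exists_path_of_dist
  obtain ⟨q, hq, hql⟩ := hrv.exists_path_of_dist
  have hdiff := forest_adj_path_length hF huv p hp q hq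
  rw [hpl, hql] at hdiff
  simp only [decide_eq_decide, hout] at hc
  omega

lemma forest_halving {F : SimpleGraph V} (hF : F.IsAcyclic) (W : Finset V) :
    ∃ S : Finset V, S ⊆ W ∧ IsStable F S ∧ W.card ≤ 2 * S.card := by
  classical
  obtain ⟨c, hc⟩ := forest_two_coloring hF
  have hsplit : (W.filter fun v => c v = true).card +
      (W.filter fun v => ¬ (c v = true)).card = W.card :=
    Finset.card_filter_add_card_filter_not _
  have stab : ∀ b : Bool, IsStable F (W.filter fun v => c v = b) := by
    intro b a ha y hy hadj
    rw [Finset.mem_filter] at ha hy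
    exact hc a y hadj (ha.2.trans hy.2.symm)
  rcases le_total (W.filter fun v => c v = true).card
      (W.filter fun v => ¬ (c v = true)).card with hle | hle
  · refine ⟨W.filter fun v => c v = false, Finset.filter_subset _ _, stab false, ?_⟩
    have : (W.filter fun v => ¬ (c v = true)) = (W.filter fun v => c v = false) := by
      apply Finset.filter_congr; intro z _; simp
    rw [this] at hsplit hle
    omega
  · exact ⟨W.filter fun v => c v = true, Finset.filter_subset _ _, stab true, by omega⟩

lemma le_stabNumAt [Fintype V] {F : SimpleGraph V} {S : Finset V} (hS : IsStable F S)
    {v : V} (hv : v ∈ S) : S.card ≤ stabNumAt F v := by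
  apply le_csSup
  · exact ⟨Fintype.card V, by rintro n ⟨T, -, -, rfl⟩; exact T.card_le_univ⟩
  · exact ⟨S, hS, hv, rfl⟩

theorem stmt8 [Fintype V] [Nonempty V] (F : SimpleGraph V) [DecidableRel F.Adj]
    (hF : F.IsAcyclic)
    (h : 3 < max 3 ((Finset.univ.image fun x : V =>
        ⌈((Fintype.card V : ℚ) + 1) / ((stabNumAt F x : ℚ) + 1)⌉).max'
        (Finset.univ_nonempty.image _))) :
    ∀ v : V,
      ⌈((Fintype.card V : ℚ) + 1) / ((stabNumAt F v : ℚ) + 1)⌉ =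
        ((Finset.univ.image fun x : V =>
          ⌈((Fintype.card V : ℚ) + 1) / ((stabNumAt F x : ℚ) + 1)⌉).max'
          (Finset.univ_nonempty.image _)) →
      ∀ x : V, x ≠ v → F.degree x < F.degree v := by
  classical
  intro v hv x hxv
  by_contra hdeg
  push_neg at hdeg
  set n := Fintype.card V with hn
  set α := stabNumAt F v with hα
  -- Step 1: the ceiling at v is ≥ 4
  have hM : (3 : ℤ) < ⌈((n : ℚ) + 1) / ((α : ℚ) + 1)⌉ := by
    rw [hv]
    rcases lt_max_iff.mp h with h' | h'
    · exact absurd h' (lt_irrefl _)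
    · exact h'
  -- Step 2: 3*α + 3 ≤ n
  have hq : (3 : ℚ) < ((n : ℚ) + 1) / ((α : ℚ) + 1) := by
    have := Int.lt_ceil.mp hM
    exact_mod_cast this
  have hden : (0 : ℚ) < (α : ℚ) + 1 := by positivity
  have h1 : 3 * α + 3 ≤ n := by
    have h3 := (lt_div_iff₀ hden).mp hq
    have h4 : ((3 * α + 3 : ℕ) : ℚ) < ((n + 1 : ℕ) : ℚ) := by push_cast; linarith
    have h5 : 3 * α + 3 < n + 1 := by exact_mod_cast h4
    omega
  -- T = closed neighborhood of v
  set T : Finset V := insert v (F.neighborFinset v) with hT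
  have hvT : v ∈ T := Finset.mem_insert_self _ _
  have hTcard : T.card = F.degree v + 1 := by
    rw [hT, Finset.card_insert_of_notMem (F.notMem_neighborFinset_self v),
      F.card_neighborFinset_eq_degree]
  -- Step 3: n + 1 ≤ deg v + 2α
  obtain ⟨S, hSW, hSstab, hScard⟩ := forest_halving hF (Finset.univ \ T)
  have hWcard : (Finset.univ \ T).card = n - T.card := by
    rw [Finset.card_sdiff_of_subset (Finset.subset_univ _), Finset.card_univ]
  have hTle : T.card ≤ n := T.card_le_univ
  have hvS : v ∉ S := fun hmem => (Finset.mem_sdiff.mp (hSW hmem)).2 hvT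
  have hstab' : IsStable F (insert v S) := by
    intro a ha b hb hadj
    rcases Finset.mem_insert.mp ha with rfl | ha' <;>
      rcases Finset.mem_insert.mp hb with rfl | hb'
    · exact F.irrefl hadj
    · exact (Finset.mem_sdiff.mp (hSW hb')).2
        (Finset.mem_insert.mpr (Or.inr ((F.mem_neighborFinset a b).mpr hadj)))
    · exact (Finset.mem_sdiff.mp (hSW ha')).2
        (Finset.mem_insert.mpr (Or.inr ((F.mem_neighborFinset b a).mpr hadj.symm)))
    · exact hSstab a ha' b hb' hadj
  have hαS : S.card + 1 ≤ α := by
    have := le_stabNumAt hstab' (Finset.mem_insert_self v S)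
    rwa [Finset.card_insert_of_notMem hvS] at this
  have h2 : n + 1 ≤ F.degree v + 2 * α := by omega
  -- Step 4: deg x ≤ α + 1
  set A : Finset V := F.neighborFinset x \ T with hA
  have hinter1 : (F.neighborFinset x ∩ F.neighborFinset v).card ≤ 1 := by
    rw [Finset.card_le_one]
    intro a ha b hb
    rw [Finset.mem_inter, F.mem_neighborFinset, F.mem_neighborFinset] at ha hb
    by_contra hab
    exact forest_no_c4 hF (Ne.symm hxv) ha.1 hb.1 hab ha.2 hb.2
  have hsub : F.neighborFinset x ∩ T ⊆ insert v (F.neighborFinset x ∩ F.neighborFinset v) := by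
    intro a ha
    rw [Finset.mem_inter, hT, Finset.mem_insert] at ha
    rcases ha.2 with rfl | ha2
    · exact Finset.mem_insert_self _ _
    · exact Finset.mem_insert.mpr (Or.inr (Finset.mem_inter.mpr ⟨ha.1, ha2⟩))
  have hinter2 : (F.neighborFinset x ∩ T).card ≤ 2 := by
    calc (F.neighborFinset x ∩ T).card
        ≤ (insert v (F.neighborFinset x ∩ F.neighborFinset v)).card :=
          Finset.card_le_card hsub
      _ ≤ (F.neighborFinset x ∩ F.neighborFinset v).card + 1 := Finset.card_insert_le _ _
      _ ≤ 2 := by omega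
  have hdegx : F.degree x ≤ A.card + 2 := by
    have hcover : F.neighborFinset x ⊆ A ∪ (F.neighborFinset x ∩ T) := by
      intro a ha
      by_cases haT : a ∈ T
      · exact Finset.mem_union.mpr (Or.inr (Finset.mem_inter.mpr ⟨ha, haT⟩))
      · exact Finset.mem_union.mpr (Or.inl (Finset.mem_sdiff.mpr ⟨ha, haT⟩))
    have := Finset.card_le_card hcover
    have hcu := Finset.card_union_le A (F.neighborFinset x ∩ T)
    rw [← F.card_neighborFinset_eq_degree]
    omega
  have hvA : v ∉ A := fun hmem => (Finset.mem_sdiff.mp hmem).2 hvT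
  have hstabA : IsStable F (insert v A) := by
    intro a ha b hb hadj
    rcases Finset.mem_insert.mp ha with rfl | ha' <;>
      rcases Finset.mem_insert.mp hb with rfl | hb'
    · exact F.irrefl hadj
    · exact (Finset.mem_sdiff.mp hb').2
        (Finset.mem_insert.mpr (Or.inr ((F.mem_neighborFinset a b).mpr hadj)))
    · exact (Finset.mem_sdiff.mp ha').2
        (Finset.mem_insert.mpr (Or.inr ((F.mem_neighborFinset b a).mpr hadj.symm)))
    · have hxa : F.Adj x a := (F.mem_neighborFinset x a).mp (Finset.mem_sdiff.mp ha').1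
      have hxb : F.Adj x b := (F.mem_neighborFinset x b).mp (Finset.mem_sdiff.mp hb').1
      exact forest_no_triangle hF hxa hxb hadj
  have hαA : A.card + 1 ≤ α := by
    have := le_stabNumAt hstabA (Finset.mem_insert_self v A)
    rwa [Finset.card_insert_of_notMem hvA] at this
  -- Final contradiction
  omega
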